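/- The generating function for Dyck paths with no pair of consecutive valleys at the same height is (1 − z² − √((1−z)(1 − 3z − z² − z³))) / (2z(1−z)), and this equals the generating function for Dyck paths avoiding the consecutive subpath uudu. -/

import Mathlib

/-- Height of the vertex after the first `j` steps of the path `w`
(`true` = up-step `u`, `false` = down-step `d`). -/
def hgt (w : List Bool) (j : ℕ) : ℤ :=
  ((w.take j).count true : ℤ) - ((w.take j).count false : ℤ)

/-- `w` is a Dyck word: equally many `u`'s and `d`'s, and every prefix
has at least as many `u`'s as `d`'s. -/
def IsDyckWord (w : List Bool) : Prop :=
  w.count true = w.count false ∧ ∀ j, 0 ≤ hgt w j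

instance : DecidablePred IsDyckWord := fun w => by
  have : IsDyckWord w ↔ (w.count true = w.count false ∧
      ∀ j ∈ List.range (w.length + 1), 0 ≤ hgt w j) := by
    constructor
    · rintro ⟨h1, h2⟩; exact ⟨h1, fun j _ => h2 j⟩
    · rintro ⟨h1, h2⟩
      refine ⟨h1, fun j => ?_⟩
      rcases le_or_gt j w.length with h | h
      · exact h2 j (List.mem_range.mpr (Nat.lt_succ_of_le h))
      · have : w.take j = w := List.take_of_length_le h.le
        have hw : hgt w j = hgt w w.length := by
          unfold hgt
          rw [this, List.take_of_length_le (le_refl _)]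
        rw [hw]
        exact h2 w.length (List.mem_range.mpr (Nat.lt_succ_of_le (le_refl _)))
  exact decidable_of_iff' _ this

/-- there is a peak (an occurrence of `ud`) at positions `i, i+1`. -/
def isPeakB (w : List Bool) (i : ℕ) : Bool :=
  w.getD i false && !(w.getD (i+1) true)

/-- there is a valley (an occurrence of `du`) at positions `i, i+1`. -/
def isValleyB (w : List Bool) (i : ℕ) : Bool :=
  !(w.getD i true) && w.getD (i+1) false

/-- length of the maximal run of `u`'s ending at position `i`. -/
def upRunL (w : List Bool) (i : ℕ) : ℕ :=
  ((List.range (i+1)).takeWhile (fun k => w.getD (i-k) false)).length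

/-- length of the maximal run of `d`'s starting at position `i`. -/
def downRunR (w : List Bool) (i : ℕ) : ℕ :=
  ((List.range (w.length - i)).takeWhile (fun k => !(w.getD (i+k) true))).length

/-- length of the maximal run of `d`'s ending at position `i`. -/
def downRunL (w : List Bool) (i : ℕ) : ℕ :=
  ((List.range (i+1)).takeWhile (fun k => !(w.getD (i-k) true))).length

/-- length of the maximal run of `u`'s starting at position `i`. -/
def upRunR (w : List Bool) (i : ℕ) : ℕ :=
  ((List.range (w.length - i)).takeWhile (fun k => w.getD (i+k) false)).length

/-- The peak at `i` is symmetric: its maximal mountain `u^a d^b` has `a = b`. -/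
def isSymPeakB (w : List Bool) (i : ℕ) : Bool :=
  isPeakB w i && (upRunL w i == downRunR w (i+1))

/-- The peak at `i` is asymmetric: its maximal mountain `u^a d^b` has `a ≠ b`. -/
def isAsymPeakB (w : List Bool) (i : ℕ) : Bool :=
  isPeakB w i && !(upRunL w i == downRunR w (i+1))

/-- weight of the peak at `i`: `min a b` for its maximal mountain `u^a d^b`. -/
def peakWeight (w : List Bool) (i : ℕ) : ℕ :=
  min (upRunL w i) (downRunR w (i+1))

/-- The valley at `i` is symmetric: the maximal `d^a u^b` containing it has `a = b`. -/
def isSymValleyB (w : List Bool) (i : ℕ) : Bool :=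
  isValleyB w i && (downRunL w i == upRunR w (i+1))

/-- weight of the valley at `i`: the largest `j` with `d^j u^j` through the valley. -/
def valleyWeight (w : List Bool) (i : ℕ) : ℕ :=
  min (downRunL w i) (upRunR w (i+1))

def peakCount (w : List Bool) : ℕ := ((List.range w.length).filter (isPeakB w)).length
def spCount (w : List Bool) : ℕ := ((List.range w.length).filter (isSymPeakB w)).length
def apCount (w : List Bool) : ℕ := ((List.range w.length).filter (isAsymPeakB w)).length
def svalCount (w : List Bool) : ℕ := ((List.range w.length).filter (isSymValleyB w)).length

/-- total weight of the symmetric peaks of `w`. -/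
def spWeight (w : List Bool) : ℕ :=
  (((List.range w.length).filter (isSymPeakB w)).map (peakWeight w)).sum

/-- total weight of the asymmetric peaks of `w`. -/
def apWeight (w : List Bool) : ℕ :=
  (((List.range w.length).filter (isAsymPeakB w)).map (peakWeight w)).sum

/-- total weight of the symmetric valleys of `w`. -/
def svWeight (w : List Bool) : ℕ :=
  (((List.range w.length).filter (isSymValleyB w)).map (valleyWeight w)).sum

/-- positions of the peaks of `w`, from left to right. -/
def peakList (w : List Bool) : List ℕ := (List.range w.length).filter (isPeakB w)

/-- positions of the valleys of `w`, from left to right. -/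
def valleyList (w : List Bool) : List ℕ := (List.range w.length).filter (isValleyB w)

/-- heights of the peaks of `w`, from left to right. -/
def peakHeights (w : List Bool) : List ℤ := (peakList w).map (fun i => hgt w (i+1))

/-- heights of the valleys of `w`, from left to right. -/
def valleyHeights (w : List Bool) : List ℤ := (valleyList w).map (fun i => hgt w (i+1))

/-- number of pairs of adjacent equal entries of a list. -/
def eqAdjCount (l : List ℤ) : ℕ :=
  ((l.zip l.tail).filter (fun p => decide (p.1 = p.2))).length

/-- `sp'`: number of pairs of consecutive valleys of `w` at the same height. -/
def spPrime (w : List Bool) : ℕ := eqAdjCount (valleyHeights w)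

/-- all Bool lists of length `m`, as a Finset. -/
def boolLists (m : ℕ) : Finset (List Bool) :=
  Finset.image (fun f : Fin m → Bool => List.ofFn f) Finset.univ

/-- The (finite) set of Dyck words of semilength `n`. -/
def dyckFinset (n : ℕ) : Finset (List Bool) :=
  (boolLists (2*n)).filter (fun w => IsDyckWord w)


/-!
Both families are counted through the first-return decomposition `w = u A d B` of a nonempty
Dyck path, and both generating functions turn out to satisfy
`Φ = 1 + z Φ ((1 - z) Φ + z)`, i.e. `(1 - z² - 2z(1 - z)Φ)² = (1 - z)(1 - 3z - z² - z³)`;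
since a power series has only one square root with constant term `1`, this pins `Φ` down.

No equal consecutive valleys: the valleys of `u A d B` are those of `A` raised by one, followed,
when `B ≠ []`, by a valley at height `0` and then those of `B`. So with `F` counting the paths
without equal consecutive valleys and `G` those among them whose first valley is not at height
`0`, `F = 1 + z F G`. The paths in `F` whose first valley is at height `0` are the `u A d B` with
`A` a pyramid and `B` a nonempty path of `G`, so `F - G = z (G - 1) / (1 - z)`, that is
`G = (1 - z) F + z`.

Avoiding `uudu`: an occurrence in `u A d B` lies inside `A`, inside `B`, or is the first `u`
followed by a prefix `udu` of `A` (it cannot straddle the `d`, since `A` does not end with `uu`).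
So with `H` counting the avoiders not starting with `udu`, the avoiders satisfy `Φ = 1 + z H Φ`,
and as the avoiders starting with `udu` are the `u d B` with `B ≠ []`, `H = Φ - z (Φ - 1)`.
-/

def nestAppend (A B : List Bool) : List Bool := true :: (A ++ false :: B)

section DyckWordTransfer

open DyckStep

namespace DyckStep

def toBool : DyckStep → Bool
  | U => true
  | D => false

def ofBool (b : Bool) : DyckStep := if b then U else D

@[simp] lemma toBool_ofBool (b : Bool) : (ofBool b).toBool = b := by cases b <;> rfl

lemma toBool_injective : Function.Injective toBool := by
  intro s t h; cases s <;> cases t <;> first | rfl | cases h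

lemma ofBool_injective : Function.Injective ofBool :=
  Function.LeftInverse.injective toBool_ofBool

end DyckStep

namespace DyckWord

def toBools (p : DyckWord) : List Bool := p.toList.map DyckStep.toBool

lemma toBools_injective : Function.Injective toBools := fun _ _ h =>
  DyckWord.ext (List.map_injective_iff.mpr DyckStep.toBool_injective h)

lemma toBools_nest_add (p q : DyckWord) :
    (p.nest + q).toBools = nestAppend p.toBools q.toBools := by
  change (([U] ++ p.toList ++ [D]) ++ q.toList).map toBool = _
  simp [toBools, nestAppend, DyckStep.toBool]

lemma isDyckWord_toBools (p : DyckWord) : IsDyckWord p.toBools := by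
  have hU (l : List DyckStep) : (l.map toBool).count true = l.count U :=
    List.count_map_of_injective _ _ DyckStep.toBool_injective U
  have hD (l : List DyckStep) : (l.map toBool).count false = l.count D :=
    List.count_map_of_injective _ _ DyckStep.toBool_injective D
  refine ⟨by rw [toBools, hU, hD, p.count_U_eq_count_D], fun j => ?_⟩
  have := p.count_D_le_count_U j
  rw [hgt, toBools, ← List.map_take, hU, hD]
  omega

end DyckWord

lemma IsDyckWord.exists_toBools {w : List Bool} (h : IsDyckWord w) :
    ∃ p : DyckWord, p.toBools = w := by
  have hU (l : List Bool) : (l.map ofBool).count U = l.count true :=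
    List.count_map_of_injective _ _ DyckStep.ofBool_injective true
  have hD (l : List Bool) : (l.map ofBool).count D = l.count false :=
    List.count_map_of_injective _ _ DyckStep.ofBool_injective false
  refine ⟨⟨w.map ofBool, by rw [hU, hD, h.1], fun i => ?_⟩, ?_⟩
  · have := h.2 i
    rw [hgt] at this
    rw [← List.map_take, hU, hD]
    omega
  · simp [DyckWord.toBools, Function.comp_def]

end DyckWordTransfer

section DyckLists

variable {w A B A' B' : List Bool}

lemma isDyckWord_nestAppend (hA : IsDyckWord A) (hB : IsDyckWord B) :
    IsDyckWord (nestAppend A B) := by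
  obtain ⟨⟨p, rfl⟩, ⟨q, rfl⟩⟩ := And.intro hA.exists_toBools hB.exists_toBools
  rw [← DyckWord.toBools_nest_add]
  exact DyckWord.isDyckWord_toBools _

lemma IsDyckWord.eq_nil_or_eq_nestAppend (h : IsDyckWord w) :
    w = [] ∨ ∃ A B, IsDyckWord A ∧ IsDyckWord B ∧ w = nestAppend A B := by
  obtain ⟨p, rfl⟩ := h.exists_toBools
  rcases eq_or_ne p 0 with rfl | hp
  · exact Or.inl rfl
  · refine Or.inr ⟨_, _, DyckWord.isDyckWord_toBools p.insidePart,
      DyckWord.isDyckWord_toBools p.outsidePart, ?_⟩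
    rw [← DyckWord.toBools_nest_add, DyckWord.nest_insidePart_add_outsidePart hp]

lemma nestAppend_inj (hA : IsDyckWord A) (hB : IsDyckWord B) (hA' : IsDyckWord A')
    (hB' : IsDyckWord B') : nestAppend A B = nestAppend A' B' ↔ A = A' ∧ B = B' := by
  refine ⟨fun h => ?_, fun h => h.1 ▸ h.2 ▸ rfl⟩
  obtain ⟨⟨p, rfl⟩, ⟨q, rfl⟩⟩ := And.intro hA.exists_toBools hB.exists_toBools
  obtain ⟨⟨p', rfl⟩, ⟨q', rfl⟩⟩ := And.intro hA'.exists_toBools hB'.exists_toBools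
  rw [← DyckWord.toBools_nest_add, ← DyckWord.toBools_nest_add] at h
  have h := DyckWord.toBools_injective h
  have hin := congrArg DyckWord.insidePart h
  have hout := congrArg DyckWord.outsidePart h
  simp only [DyckWord.insidePart_add DyckWord.nest_ne_zero, DyckWord.insidePart_nest,
    DyckWord.outsidePart_add DyckWord.nest_ne_zero, DyckWord.outsidePart_nest, zero_add]
    at hin hout
  exact ⟨congrArg _ hin, congrArg _ hout⟩

lemma IsDyckWord.getLast?_ne_some_true (h : IsDyckWord w) : w.getLast? ≠ some true := by
  obtain ⟨p, rfl⟩ := h.exists_toBools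
  rcases eq_or_ne p 0 with rfl | hp
  · exact nofun
  · have hne : p.toList ≠ [] := DyckWord.toList_ne_nil.mpr hp
    simp [DyckWord.toBools, List.getLast?_map, List.getLast?_eq_some_getLast hne,
      DyckWord.getLast_eq_D, DyckStep.toBool]

lemma IsDyckWord.head?_eq_some_true_iff (h : IsDyckWord w) : w.head? = some true ↔ w ≠ [] := by
  rcases h.eq_nil_or_eq_nestAppend with rfl | ⟨A, B, -, -, rfl⟩ <;> simp [nestAppend]

lemma IsDyckWord.length_eq_two_mul_count (h : IsDyckWord w) : w.length = 2 * w.count true := by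
  rw [← List.count_true_add_count_false, ← h.1, two_mul]

lemma mem_dyckFinset {n : ℕ} : w ∈ dyckFinset n ↔ IsDyckWord w ∧ w.length = 2 * n := by
  have hlen : w ∈ boolLists (2 * n) ↔ w.length = 2 * n := by
    simp only [boolLists, Finset.mem_image, Finset.mem_univ, true_and]
    refine ⟨?_, fun h => ?_⟩
    · rintro ⟨f, rfl⟩
      exact List.length_ofFn
    · exact ⟨fun i => w[i.val], List.ext_getElem (by simp [h]) (by simp)⟩
  rw [dyckFinset, Finset.mem_filter, hlen, and_comm]

lemma dyckFinset_zero : dyckFinset 0 = {[]} := by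
  ext w
  rw [mem_dyckFinset, Finset.mem_singleton, mul_zero, List.length_eq_zero_iff]
  exact ⟨And.right, fun h => ⟨h ▸ by decide, h⟩⟩

lemma ne_nil_of_mem_dyckFinset_succ {n : ℕ} (hw : w ∈ dyckFinset (n + 1)) : w ≠ [] := by
  rintro rfl
  simp [mem_dyckFinset] at hw

end DyckLists

open PowerSeries

section GeneratingFunctions

open Finset

variable (P : List Bool → Prop) [DecidablePred P]

noncomputable def dyckGF : PowerSeries ℚ :=
  mk fun n => (((dyckFinset n).filter P).card : ℚ)

variable {P} {Q C : List Bool → Prop} [DecidablePred Q] [DecidablePred C]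

lemma card_filter_dyckFinset_succ
    (hC : ∀ A B, IsDyckWord A → IsDyckWord B → (C (nestAppend A B) ↔ P A ∧ Q B)) (n : ℕ) :
    ((dyckFinset (n + 1)).filter C).card =
      ∑ ij ∈ antidiagonal n,
        ((dyckFinset ij.1).filter P).card * ((dyckFinset ij.2).filter Q).card := by
  simp_rw [← card_product, ← card_sigma]
  refine (card_bij (fun x _ => nestAppend x.2.1 x.2.2) ?_ ?_ ?_).symm
  · rintro ⟨⟨i, j⟩, A, B⟩ hx
    simp only [mem_sigma, HasAntidiagonal.mem_antidiagonal, mem_product, mem_filter,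
      mem_dyckFinset] at hx ⊢
    obtain ⟨hij, ⟨⟨hA, hlA⟩, hPA⟩, ⟨hB, hlB⟩, hQB⟩ := hx
    refine ⟨⟨isDyckWord_nestAppend hA hB, ?_⟩, (hC A B hA hB).mpr ⟨hPA, hQB⟩⟩
    simp only [nestAppend, List.length_cons, List.length_append, hlA, hlB]
    omega
  · rintro ⟨⟨i, j⟩, A, B⟩ hx ⟨⟨i', j'⟩, A', B'⟩ hx' h
    simp only [mem_sigma, HasAntidiagonal.mem_antidiagonal, mem_product, mem_filter,
      mem_dyckFinset] at hx hx'
    obtain ⟨rfl, rfl⟩ := (nestAppend_inj hx.2.1.1.1 hx.2.2.1.1 hx'.2.1.1.1 hx'.2.2.1.1).mp h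
    obtain ⟨rfl, rfl⟩ : i = i' ∧ j = j' := by omega
    rfl
  · intro w hw
    obtain ⟨⟨hw, hlw⟩, hCw⟩ := (mem_filter.trans (and_congr_left' mem_dyckFinset)).mp hw
    rcases hw.eq_nil_or_eq_nestAppend with rfl | ⟨A, B, hA, hB, rfl⟩
    · simp at hlw
    obtain ⟨hPA, hQB⟩ := (hC A B hA hB).mp hCw
    refine ⟨⟨⟨A.count true, B.count true⟩, A, B⟩, ?_, rfl⟩
    have hlA := hA.length_eq_two_mul_count
    have hlB := hB.length_eq_two_mul_count
    simp only [nestAppend, List.length_cons, List.length_append] at hlw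
    simp only [mem_sigma, HasAntidiagonal.mem_antidiagonal, mem_product, mem_filter,
      mem_dyckFinset]
    exact ⟨by omega, ⟨⟨hA, hlA⟩, hPA⟩, ⟨hB, hlB⟩, hQB⟩

lemma dyckGF_eq_of_nestAppend
    (hC : ∀ A B, IsDyckWord A → IsDyckWord B → (C (nestAppend A B) ↔ P A ∧ Q B)) :
    dyckGF C = (if C [] then 1 else 0) + X * (dyckGF P * dyckGF Q) := by
  ext n
  rcases n with _ | n
  · by_cases h : C [] <;> simp [dyckGF, dyckFinset_zero, filter_singleton, h]
  · rw [map_add, coeff_succ_X_mul, coeff_mul]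
    simp only [dyckGF, coeff_mk, card_filter_dyckFinset_succ hC]
    split_ifs <;> simp

lemma dyckGF_and_add_dyckGF_and_not :
    dyckGF (fun w => P w ∧ Q w) + dyckGF (fun w => P w ∧ ¬ Q w) = dyckGF P := by
  ext n
  simp only [dyckGF, map_add, coeff_mk, ← filter_filter, ← Nat.cast_add,
    card_filter_add_card_filter_not]

lemma dyckGF_ne_nil_and (hP : P []) : dyckGF (fun w => w ≠ [] ∧ P w) = dyckGF P - 1 := by
  ext n
  rcases n with _ | n
  · simp [dyckGF, dyckFinset_zero, filter_singleton, hP]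
  · have : (dyckFinset (n + 1)).filter (fun w => w ≠ [] ∧ P w) = (dyckFinset (n + 1)).filter P :=
      filter_congr fun w hw => and_iff_right (ne_nil_of_mem_dyckFinset_succ hw)
    simp [dyckGF, this]

lemma dyckGF_eq_nil : dyckGF (fun w => w = []) = 1 := by
  ext n
  rcases n with _ | n
  · simp [dyckGF, dyckFinset_zero, filter_singleton]
  · have : (dyckFinset (n + 1)).filter (fun w => w = []) = ∅ :=
      filter_eq_empty_iff.mpr fun w hw => ne_nil_of_mem_dyckFinset_succ hw
    simp [dyckGF, this]

end GeneratingFunctions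

section ValleyHeights

variable {w A B : List Bool}

@[simp] lemma valleyHeights_nil : valleyHeights [] = [] := rfl

lemma hgt_cons_succ (b : Bool) (t : List Bool) (j : ℕ) :
    hgt (b :: t) (j + 1) = (if b then 1 else -1) + hgt t j := by
  cases b <;> simp [hgt] <;> ring

lemma IsDyckWord.hgt_length (h : IsDyckWord w) : hgt w w.length = 0 := by
  rw [hgt, List.take_length, h.1, sub_self]

lemma valleyList_cons (b : Bool) (t : List Bool) :
    valleyList (b :: t) =
      (if isValleyB (b :: t) 0 then [0] else []) ++ (valleyList t).map Nat.succ := by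
  rw [valleyList, List.length_cons, List.range_succ_eq_map, List.filter_cons, List.filter_map]
  split_ifs <;> rfl

lemma valleyHeights_cons (b : Bool) (t : List Bool) :
    valleyHeights (b :: t) =
      (if b = false ∧ t.head? = some true then [-1] else []) ++
        (valleyHeights t).map ((if b then 1 else -1) + ·) := by
  rw [valleyHeights, valleyList_cons, List.map_append, List.map_map, valleyHeights, List.map_map]
  congr 1
  · rcases b with _ | _ <;> rcases t with _ | ⟨_ | _, _⟩ <;> simp [isValleyB, hgt]
  · congr 1
    funext i
    exact hgt_cons_succ b t (i + 1)

lemma valleyHeights_append (x : List Bool) {y : List Bool} (hy : y.head? ≠ some true) :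
    valleyHeights (x ++ y) = valleyHeights x ++ (valleyHeights y).map (hgt x x.length + ·) := by
  induction x with
  | nil => simp [hgt]
  | cons b t ih =>
    have hhead : (t ++ y).head? = some true ↔ t.head? = some true := by cases t <;> simp_all
    rw [List.cons_append, valleyHeights_cons, valleyHeights_cons, ih, List.length_cons,
      hgt_cons_succ, List.map_append, List.map_map, List.append_assoc]
    simp only [hhead]
    congr 3
    funext v
    simp only [Function.comp_apply]
    ring

lemma valleyHeights_nestAppend (hA : IsDyckWord A) (hB : IsDyckWord B) :
    valleyHeights (nestAppend A B) =
      (valleyHeights A).map (1 + ·) ++ (if B = [] then [] else 0 :: valleyHeights B) := by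
  rw [nestAppend, valleyHeights_cons, valleyHeights_append A (by simp), hA.hgt_length,
    valleyHeights_cons]
  by_cases hBe : B = []
  · simp [hBe]
  · simp [hBe, hB.head?_eq_some_true_iff, Function.comp_def]

lemma IsDyckWord.nonneg_of_mem_valleyHeights (h : IsDyckWord w) {v : ℤ}
    (hv : v ∈ valleyHeights w) : 0 ≤ v := by
  obtain ⟨i, -, rfl⟩ := List.mem_map.mp hv
  exact h.2 (i + 1)

end ValleyHeights

section Pyramids

open Finset

def pyramid (n : ℕ) : List Bool := List.replicate n true ++ List.replicate n false

lemma pyramid_succ (n : ℕ) : pyramid (n + 1) = nestAppend (pyramid n) [] := by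
  rw [pyramid, pyramid, List.replicate_succ, List.replicate_succ']
  simp [nestAppend]

lemma isDyckWord_pyramid (n : ℕ) : IsDyckWord (pyramid n) := by
  induction n with
  | zero => decide
  | succ n ih => rw [pyramid_succ]; exact isDyckWord_nestAppend ih (by decide)

lemma valleyHeights_replicate_append_replicate (i j : ℕ) :
    valleyHeights (List.replicate i true ++ List.replicate j false) = [] := by
  induction i with
  | zero =>
    induction j with
    | zero => rfl
    | succ j ih => cases j <;> simp_all [List.replicate_succ, valleyHeights_cons]
  | succ i ih => simp [List.replicate_succ, valleyHeights_cons, ih]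

lemma exists_eq_replicate_of_valleyHeights_eq_nil {w : List Bool} (h : valleyHeights w = []) :
    ∃ i j, w = List.replicate i true ++ List.replicate j false := by
  induction w with
  | nil => exact ⟨0, 0, rfl⟩
  | cons b t ih =>
    rw [valleyHeights_cons, List.append_eq_nil_iff, List.map_eq_nil_iff] at h
    obtain ⟨i, j, rfl⟩ := ih h.2
    cases b
    · obtain rfl : i = 0 := by
        rcases i with _ | i
        · rfl
        · simp [List.replicate_succ] at h
      exact ⟨0, j + 1, by simp [List.replicate_succ]⟩
    · exact ⟨i + 1, j, by simp [List.replicate_succ]⟩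

lemma filter_valleyHeights_eq_nil_dyckFinset (n : ℕ) :
    (dyckFinset n).filter (fun w => valleyHeights w = []) = {pyramid n} := by
  ext w
  simp only [mem_filter, mem_singleton, mem_dyckFinset]
  constructor
  · rintro ⟨⟨hw, hlen⟩, hv⟩
    obtain ⟨i, j, rfl⟩ := exists_eq_replicate_of_valleyHeights_eq_nil hv
    have hij := hw.1
    simp [List.count_replicate] at hij hlen
    obtain ⟨rfl, rfl⟩ : i = n ∧ j = n := by omega
    rfl
  · rintro rfl
    exact ⟨⟨isDyckWord_pyramid n, by simp [pyramid]; ring⟩,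
      valleyHeights_replicate_append_replicate n n⟩

lemma dyckGF_valleyHeights_eq_nil :
    dyckGF (fun w => valleyHeights w = []) = PowerSeries.mk 1 := by
  ext n
  simp [dyckGF, filter_valleyHeights_eq_nil_dyckFinset]

end Pyramids

section EqualConsecutiveValleys

variable {w A B : List Bool}

lemma eqAdjCount_eq_zero_iff (l : List ℤ) : eqAdjCount l = 0 ↔ l.IsChain (· ≠ ·) := by
  induction l using List.twoStepInduction with
  | nil => simp [eqAdjCount]
  | singleton => simp [eqAdjCount]
  | cons_cons a b t _ ih =>
    rw [List.isChain_cons_cons, ← ih]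
    by_cases hab : a = b <;> simp [eqAdjCount, hab]

lemma spPrime_eq_zero_iff : spPrime w = 0 ↔ (valleyHeights w).IsChain (· ≠ ·) :=
  eqAdjCount_eq_zero_iff _

lemma spPrime_eq_zero_of_valleyHeights_eq_nil (h : valleyHeights w = []) : spPrime w = 0 := by
  rw [spPrime_eq_zero_iff, h]
  exact List.IsChain.nil

lemma spPrime_nestAppend_eq_zero_iff (hA : IsDyckWord A) (hB : IsDyckWord B) :
    spPrime (nestAppend A B) = 0 ↔
      spPrime A = 0 ∧ spPrime B = 0 ∧ (valleyHeights B).head? ≠ some 0 := by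
  have hshift : ((valleyHeights A).map (1 + ·)).IsChain (· ≠ ·) ↔ spPrime A = 0 := by
    rw [spPrime_eq_zero_iff, List.isChain_map]
    simp
  rw [spPrime_eq_zero_iff (w := nestAppend A B), valleyHeights_nestAppend hA hB,
    spPrime_eq_zero_iff (w := B)]
  by_cases hBe : B = []
  · simp [hBe, hshift]
  · have hjoin : ∀ x ∈ ((valleyHeights A).map (1 + ·)).getLast?, x ≠ 0 := by
      intro x hx
      obtain ⟨v, hv, rfl⟩ := List.mem_map.mp (List.mem_of_mem_getLast? hx)
      have := hA.nonneg_of_mem_valleyHeights hv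
      omega
    rw [if_neg hBe, List.isChain_append, hshift, List.isChain_cons]
    cases valleyHeights B <;> simp_all [eq_comm, and_comm]

lemma head?_valleyHeights_nestAppend_eq_some_zero_iff (hA : IsDyckWord A) (hB : IsDyckWord B) :
    (valleyHeights (nestAppend A B)).head? = some 0 ↔ valleyHeights A = [] ∧ B ≠ [] := by
  rw [valleyHeights_nestAppend hA hB]
  cases hv : valleyHeights A with
  | nil => by_cases hBe : B = [] <;> simp [hBe]
  | cons v l =>
    have := hA.nonneg_of_mem_valleyHeights (hv ▸ List.mem_cons_self)
    simp
    omega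

lemma dyckGF_spPrime_eq_zero_eq_one_add :
    dyckGF (fun w => spPrime w = 0) =
      1 + X * dyckGF (fun w => spPrime w = 0) *
        ((1 - X) * dyckGF (fun w => spPrime w = 0) + X) := by
  have hF := dyckGF_eq_of_nestAppend (C := fun w => spPrime w = 0)
    (P := fun A => spPrime A = 0)
    (Q := fun B => spPrime B = 0 ∧ (valleyHeights B).head? ≠ some 0)
    fun A B hA hB => spPrime_nestAppend_eq_zero_iff hA hB
  have hT := dyckGF_eq_of_nestAppend
    (C := fun w => spPrime w = 0 ∧ (valleyHeights w).head? = some 0)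
    (P := fun A => valleyHeights A = [])
    (Q := fun B => B ≠ [] ∧ spPrime B = 0 ∧ (valleyHeights B).head? ≠ some 0)
    fun A B hA hB => by
      have := @spPrime_eq_zero_of_valleyHeights_eq_nil A
      rw [spPrime_nestAppend_eq_zero_iff hA hB,
        head?_valleyHeights_nestAppend_eq_some_zero_iff hA hB]
      tauto
  have hTG := dyckGF_and_add_dyckGF_and_not (P := fun w => spPrime w = 0)
    (Q := fun w => (valleyHeights w).head? = some 0)
  rw [if_pos (by rfl)] at hF
  rw [if_neg (by simp), dyckGF_valleyHeights_eq_nil, dyckGF_ne_nil_and ⟨rfl, by simp⟩] at hT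
  set F := dyckGF (fun w => spPrime w = 0)
  set G := dyckGF (fun w => spPrime w = 0 ∧ (valleyHeights w).head? ≠ some 0)
  linear_combination hF + X * F *
    ((1 - X) * hTG - (1 - X) * hT - X * (G - 1) * mk_one_mul_one_sub_eq_one ℚ)

end EqualConsecutiveValleys

section UUDUAvoidance

variable {A B : List Bool}

lemma IsDyckWord.not_suffix_true_true (hA : IsDyckWord A) : ¬ [true, true] <:+ A := by
  rintro ⟨s, rfl⟩
  exact hA.getLast?_ne_some_true (by simp)

lemma prefix_udu_append_false_iff (hA : IsDyckWord A) :
    [true, false, true] <+: A ++ false :: B ↔ [true, false, true] <+: A := by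
  match A, hA with
  | [], _ => simp
  | [a], hA => exact absurd hA.length_eq_two_mul_count (by cases a <;> decide)
  | [a, b], hA =>
    obtain ⟨rfl, rfl⟩ : a = true ∧ b = false := by
      have h1 := hA.head?_eq_some_true_iff.mpr (by simp)
      have h2 := hA.getLast?_ne_some_true
      cases b <;> simp_all
    simp
  | a :: b :: c :: A, _ => simp [List.cons_prefix_cons]

lemma prefix_udu_nestAppend_iff (hA : IsDyckWord A) (hB : IsDyckWord B) :
    [true, false, true] <+: nestAppend A B ↔ A = [] ∧ B ≠ [] := by
  rcases hA.eq_nil_or_eq_nestAppend with rfl | ⟨A₁, A₂, -, -, rfl⟩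
  · rcases hB.eq_nil_or_eq_nestAppend with rfl | ⟨B₁, B₂, -, -, rfl⟩ <;> simp [nestAppend]
  · simp [nestAppend]

lemma uudu_infix_nestAppend_iff (hA : IsDyckWord A) :
    [true, true, false, true] <:+: nestAppend A B ↔
      [true, false, true] <+: A ∨ [true, true, false, true] <:+: A ∨
        [true, true, false, true] <:+: B := by
  have hstraddle : (∃ l₁ l₂, [true, true, false, true] = l₁ ++ l₂ ∧ l₁ <:+ A ∧
      l₂ <+: false :: B) → [true, true, false, true] <:+: A := by
    rintro ⟨l₁, l₂, h, h₁, h₂⟩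
    simp only [List.cons_eq_append_iff, List.nil_eq_append_iff] at h
    rcases h with ⟨rfl, rfl⟩ | ⟨_, rfl, ⟨rfl, rfl⟩ | ⟨_, rfl, ⟨rfl, rfl⟩ |
      ⟨_, rfl, ⟨rfl, rfl⟩ | ⟨_, rfl, rfl, rfl⟩⟩⟩⟩
    · simp at h₂
    · simp at h₂
    · exact absurd h₁ hA.not_suffix_true_true
    · simp at h₂
    · exact h₁.isInfix
  simp only [nestAppend, List.infix_cons_iff, List.cons_prefix_cons, true_and,
    prefix_udu_append_false_iff hA, List.infix_append_iff, Bool.true_eq_false, false_and,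
    false_or]
  constructor
  · rintro (h | h | h | h)
    exacts [Or.inl h, Or.inr (Or.inl h), Or.inr (Or.inr h), Or.inr (Or.inl (hstraddle h))]
  · rintro (h | h | h)
    exacts [Or.inl h, Or.inr (Or.inl h), Or.inr (Or.inr (Or.inl h))]

lemma dyckGF_not_uudu_infix_eq_one_add :
    dyckGF (fun w => ¬ [true, true, false, true] <:+: w) =
      1 + X * dyckGF (fun w => ¬ [true, true, false, true] <:+: w) *
        ((1 - X) * dyckGF (fun w => ¬ [true, true, false, true] <:+: w) + X) := by
  have hF := dyckGF_eq_of_nestAppend (C := fun w => ¬ [true, true, false, true] <:+: w)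
    (P := fun A => ¬ [true, true, false, true] <:+: A ∧ ¬ [true, false, true] <+: A)
    (Q := fun B => ¬ [true, true, false, true] <:+: B)
    fun A B hA _ => by rw [uudu_infix_nestAppend_iff hA]; tauto
  have hS := dyckGF_eq_of_nestAppend
    (C := fun w => ¬ [true, true, false, true] <:+: w ∧ [true, false, true] <+: w)
    (P := fun A => A = [])
    (Q := fun B => B ≠ [] ∧ ¬ [true, true, false, true] <:+: B)
    fun A B hA hB => by
      rw [uudu_infix_nestAppend_iff hA, prefix_udu_nestAppend_iff hA hB]
      by_cases hA : A = [] <;> simp [hA, and_comm]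
  have hSH := dyckGF_and_add_dyckGF_and_not
    (P := fun w => ¬ [true, true, false, true] <:+: w) (Q := fun w => [true, false, true] <+: w)
  rw [if_pos (by simp)] at hF
  rw [if_neg (by simp), dyckGF_eq_nil, dyckGF_ne_nil_and (by simp)] at hS
  set F := dyckGF (fun w => ¬ [true, true, false, true] <:+: w)
  linear_combination hF + X * F * (hSH - hS)

end UUDUAvoidance

section SquareRoot

variable {K : Type*} [CommRing K]

lemma sq_eq_of_eq_one_add {F : PowerSeries K} (h : F = 1 + X * F * ((1 - X) * F + X)) :
    (1 - X ^ 2 - 2 * X * (1 - X) * F) ^ 2 = (1 - X) * (1 - 3 * X - X ^ 2 - X ^ 3) := by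
  linear_combination (-(4 * X * (1 - X))) * h

variable [IsDomain K] [CharZero K]

lemma eq_of_sq_eq_sq_of_constantCoeff_eq_one {R S : PowerSeries K} (h : R ^ 2 = S ^ 2)
    (hR : constantCoeff R = 1) (hS : constantCoeff S = 1) : R = S := by
  refine (sq_eq_sq_iff_eq_or_eq_neg.mp h).resolve_right fun hneg => two_ne_zero (α := K) ?_
  have := congrArg constantCoeff hneg
  rw [map_neg, hR, hS] at this
  linear_combination this

lemma mul_eq_one_sub_sq_sub_of_eq_one_add {F R : PowerSeries K}
    (hF : F = 1 + X * F * ((1 - X) * F + X))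
    (hR : R ^ 2 = (1 - X) * (1 - 3 * X - X ^ 2 - X ^ 3)) (hR0 : constantCoeff R = 1) :
    2 * X * (1 - X) * F = 1 - X ^ 2 - R := by
  have := eq_of_sq_eq_sq_of_constantCoeff_eq_one (hR.trans (sq_eq_of_eq_one_add hF).symm) hR0
    (by simp)
  linear_combination this

lemma eq_of_eq_one_add {F G : PowerSeries K} (hF : F = 1 + X * F * ((1 - X) * F + X))
    (hG : G = 1 + X * G * ((1 - X) * G + X)) : F = G := by
  have hX : (2 * X * (1 - X) : PowerSeries K) ≠ 0 := by
    rw [mul_right_comm]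
    refine mul_ne_zero (fun h => two_ne_zero (α := K) ?_) X_ne_zero
    simpa [map_ofNat] using congrArg constantCoeff h
  refine mul_left_cancel₀ hX ?_
  linear_combination mul_eq_one_sub_sq_sub_of_eq_one_add hF (sq_eq_of_eq_one_add hG) (by simp)

end SquareRoot

open PowerSeries in
/-- The generating function for Dyck paths with no pair of
consecutive valleys at the same height is
`(1 − z² − √((1−z)(1−3z−z²−z³))) / (2z(1−z))`, where the square root is the
power series `R` with `R² = (1−z)(1−3z−z²−z³)` and constant term `1`; moreover
this equals the generating function for Dyck paths avoiding the consecutive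
subpath `uudu`. -/
theorem no_equal_consecutive_valleys_gf :
    (∀ R : PowerSeries ℚ, R ^ 2 = (1 - X) * (1 - 3 * X - X ^ 2 - X ^ 3) →
      constantCoeff R = 1 →
      2 * X * (1 - X) *
          (mk fun n => (((dyckFinset n).filter (fun w => spPrime w = 0)).card : ℚ)) =
        1 - X ^ 2 - R) ∧
    (∀ n : ℕ,
      ((dyckFinset n).filter (fun w => spPrime w = 0)).card =
      ((dyckFinset n).filter
        (fun w => ¬ [true, true, false, true] <:+: w)).card) := by
  refine ⟨fun R hR hR0 =>
    mul_eq_one_sub_sq_sub_of_eq_one_add dyckGF_spPrime_eq_zero_eq_one_add hR hR0, fun n => ?_⟩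
  have := eq_of_eq_one_add dyckGF_spPrime_eq_zero_eq_one_add dyckGF_not_uudu_infix_eq_one_add
  simpa [dyckGF] using congrArg (coeff n) this
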